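/- arXiv:0807.3738 — 3 statements merged into one kernel-verified Lean document; each statement's English description precedes it below -/
import Mathlib

section
/- Every tree of diameter 4 is odd-graceful. -/
open SimpleGraph

/-- An odd-graceful labeling of `G` of size `n = |E(G)|`: an injection into
`{0,...,2n-1}` whose induced edge weights `|f x - f y|` are exactly the odd
numbers `{1,3,...,2n-1}`. -/
def IsOddGracefulLabeling {V : Type*} (G : SimpleGraph V) (f : V → ℕ) : Prop :=
  Function.Injective f ∧ (∀ v, f v < 2 * G.edgeSet.ncard) ∧
  ∀ m : ℕ, (∃ x y, G.Adj x y ∧ ((f x : ℤ) - f y).natAbs = m) ↔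
    (Odd m ∧ m < 2 * G.edgeSet.ncard)

/-- A graph is odd-graceful if it admits an odd-graceful labeling. -/
def IsOddGraceful {V : Type*} (G : SimpleGraph V) : Prop :=
  ∃ f : V → ℕ, IsOddGracefulLabeling G f

/-- A graceful labeling of `G` of size `n`: an injection into `{0,...,n}` whose
induced edge weights are exactly `{1,...,n}`. -/
def IsGracefulLabeling {V : Type*} (G : SimpleGraph V) (f : V → ℕ) : Prop :=
  Function.Injective f ∧ (∀ v, f v ≤ G.edgeSet.ncard) ∧
  ∀ m : ℕ, (∃ x y, G.Adj x y ∧ ((f x : ℤ) - f y).natAbs = m) ↔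
    (1 ≤ m ∧ m ≤ G.edgeSet.ncard)

/-- An `α`-labeling: a graceful labeling together with a boundary value `lam`
separating the endpoints of every edge. -/
def IsAlphaLabeling {V : Type*} (G : SimpleGraph V) (f : V → ℕ) (lam : ℕ) : Prop :=
  IsGracefulLabeling G f ∧
  ∀ x y, G.Adj x y → (f x ≤ lam ∧ lam < f y) ∨ (f y ≤ lam ∧ lam < f x)

/-- An `α`-graph: a graph admitting an `α`-labeling. -/
def IsAlphaGraph {V : Type*} (G : SimpleGraph V) : Prop :=
  ∃ (f : V → ℕ) (lam : ℕ), IsAlphaLabeling G f lam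

/-- A caterpillar: a tree having a path containing every vertex that is not a
leaf (a leaf being a vertex with exactly one neighbour). -/
def IsCaterpillar {V : Type*} (G : SimpleGraph V) : Prop :=
  G.IsTree ∧ ∃ (a b : V) (p : G.Walk a b), p.IsPath ∧
    ∀ v : V, ¬ (∃! w : V, G.Adj v w) → v ∈ p.support

section AuxLemmas


set_option linter.unusedSectionVars false
variable {V : Type*} [DecidableEq V] {G : SimpleGraph V}

lemma tree_path_eq (hG : G.IsTree) {u v : V} (p q : G.Walk u v) (hp : p.IsPath)
    (hq : q.IsPath) : p = q := by
  obtain ⟨r, _, hr⟩ := hG.existsUnique_path u v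
  rw [hr p hp, hr q hq]

lemma tree_path_length (hG : G.IsTree) {u v : V} (p : G.Walk u v) (hp : p.IsPath) :
    p.length = G.dist u v := by
  obtain ⟨q, hq, hql⟩ := hG.isConnected.exists_path_of_dist u v
  rw [tree_path_eq hG p q hp hq, hql]

lemma not_mem_dropUntil {c v u : V} (p : G.Walk c v) (hp : p.IsPath)
    (h : u ∈ p.support) (hne : u ≠ c) : c ∉ (p.dropUntil u h).support := by
  intro hc
  have hspec := p.take_spec h
  have hnd : p.support.Nodup := hp.support_nodup
  rw [← hspec, Walk.support_append] at hnd
  have hdisj := List.disjoint_of_nodup_append hnd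
  have hc1 : c ∈ (p.takeUntil u h).support := Walk.start_mem_support _
  have hc2 : c ∈ (p.dropUntil u h).support.tail := by
    have := (p.dropUntil u h).support_eq_cons
    rw [this] at hc
    rw [List.mem_cons] at hc; rcases hc with h1 | h1
    · exact (hne h1.symm).elim
    · exact h1
  exact hdisj hc1 hc2

lemma radius_le_two (hG : G.IsTree) (hle : ∀ u v : V, G.dist u v ≤ 4) {x y : V}
    (hxy : G.dist x y = 4) : ∃ c : V, ∀ v : V, G.dist c v ≤ 2 := by
  obtain ⟨P, hP, hPl⟩ := hG.isConnected.exists_path_of_dist x y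
  rw [hxy] at hPl
  rcases P with _ | ⟨h1, p1⟩; · simp at hPl
  rename_i a
  rcases p1 with _ | ⟨h2, p2⟩; · simp at hPl
  rename_i c
  rcases p2 with _ | ⟨h3, p3⟩; · simp at hPl
  rename_i b
  rcases p3 with _ | ⟨h4, p4⟩; · simp at hPl
  rcases p4 with _ | ⟨h5, p5⟩
  swap; · simp at hPl
  rw [Walk.isPath_def] at hP
  simp only [Walk.support_cons, Walk.support_nil, List.nodup_cons, List.mem_cons,
    List.mem_singleton, List.not_mem_nil, or_false, not_or, List.nodup_nil] at hP
  obtain ⟨⟨hxa, hxc, hxb, hxy5⟩, ⟨hac, hab, hay⟩, ⟨hcb, hcy⟩, hby, -⟩ := hP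
  refine ⟨c, fun v => ?_⟩
  by_contra hgt
  push_neg at hgt
  obtain ⟨Q, hQ, hQl⟩ := hG.isConnected.exists_path_of_dist c v
  have key : ∀ s t, (hs : s ∈ Q.support) → t ∈ Q.support → s ≠ c → t ≠ c →
      ∀ (S : G.Walk s t), S.IsPath → c ∈ S.support → False := by
    intro s t hs ht hsc htc S hSp hcS
    by_cases hts : t ∈ (Q.dropUntil s hs).support
    · have hR : ((Q.dropUntil s hs).takeUntil t hts).IsPath :=
        (hQ.dropUntil hs).takeUntil hts
      have hcR : c ∉ ((Q.dropUntil s hs).takeUntil t hts).support := fun hc =>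
        not_mem_dropUntil Q hQ hs hsc (Walk.support_takeUntil_subset _ hts hc)
      have heq := tree_path_eq hG _ S hR hSp
      rw [heq] at hcR; exact hcR hcS
    · have hts' : t ∈ (Q.takeUntil s hs).support := by
        have hspec := Q.take_spec hs
        rw [← hspec, Walk.mem_support_append_iff] at ht
        rcases ht with h' | h'
        · exact h'
        · exact absurd h' hts
      have hR : (((Q.takeUntil s hs).dropUntil t hts').reverse).IsPath :=
        ((hQ.takeUntil hs).dropUntil hts').reverse
      have hcR : c ∉ (((Q.takeUntil s hs).dropUntil t hts').reverse).support := by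
        rw [Walk.support_reverse]
        intro hc
        rw [List.mem_reverse] at hc
        exact not_mem_dropUntil _ (hQ.takeUntil hs) hts' htc hc
      have heq := tree_path_eq hG _ S hR hSp
      rw [heq] at hcR
      exact hcR hcS
  have hA : x ∈ Q.support ∨ a ∈ Q.support := by
    by_contra hA
    push_neg at hA
    obtain ⟨hx, ha⟩ := hA
    have hW : (Walk.cons h1 (Walk.cons h2 Q)).IsPath := by
      rw [Walk.isPath_def]
      simp only [Walk.support_cons, List.nodup_cons, List.mem_cons, not_or]
      exact ⟨⟨hxa, hx⟩, ha, hQ.support_nodup⟩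
    have hlen := tree_path_length hG _ hW
    simp only [Walk.length_cons] at hlen
    have h4' := hle x v
    omega
  have hB : y ∈ Q.support ∨ b ∈ Q.support := by
    by_contra hB
    push_neg at hB
    obtain ⟨hy, hb⟩ := hB
    have hW : (Walk.cons h4.symm (Walk.cons h3.symm Q)).IsPath := by
      rw [Walk.isPath_def]
      simp only [Walk.support_cons, List.nodup_cons, List.mem_cons, not_or]
      exact ⟨⟨fun h => hby h.symm, hy⟩, hb, hQ.support_nodup⟩
    have hlen := tree_path_length hG _ hW
    simp only [Walk.length_cons] at hlen
    have h4' := hle y v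
    omega
  rcases hA with hs | hs <;> rcases hB with ht | ht
  · exact key x y hs ht hxc (fun h => hcy h.symm)
      (Walk.cons h1 (Walk.cons h2 (Walk.cons h3 (Walk.cons h4 Walk.nil))))
      (by rw [Walk.isPath_def]; simp [hxa, hxc, hxb, hxy5, hac, hab, hay, hcb, hcy, hby])
      (by simp)
  · exact key x b hs ht hxc (fun h => hcb h.symm)
      (Walk.cons h1 (Walk.cons h2 (Walk.cons h3 Walk.nil)))
      (by rw [Walk.isPath_def]; simp [hxa, hxc, hxb, hac, hab, hcb])
      (by simp)
  · exact key a y hs ht hac (fun h => hcy h.symm)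
      (Walk.cons h2 (Walk.cons h3 (Walk.cons h4 Walk.nil)))
      (by rw [Walk.isPath_def]; simp [hac, hab, hay, hcb, hcy, hby])
      (by simp)
  · exact key a b hs ht hac (fun h => hcb h.symm)
      (Walk.cons h2 (Walk.cons h3 Walk.nil))
      (by rw [Walk.isPath_def]; simp [hac, hab, hcb])
      (by simp)

lemma tri_chotomy (hG : G.IsTree) {c : V} (hc : ∀ v, G.dist c v ≤ 2) (v : V) :
    v = c ∨ G.Adj c v ∨ G.dist c v = 2 := by
  have h := hc v
  interval_cases h' : G.dist c v
  · left
    exact (((hG.isConnected c v).dist_eq_zero_iff).mp h').symm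
  · right; left; exact dist_eq_one_iff_adj.mp h'
  · right; right; rfl

lemma parent_spec (hG : G.IsTree) {c v : V} (hv : G.dist c v = 2) :
    ∃! w, G.Adj c w ∧ G.Adj w v := by
  obtain ⟨P, hP, hPl⟩ := hG.isConnected.exists_path_of_dist c v
  rw [hv] at hPl
  rcases P with _ | ⟨h1, p1⟩; · simp at hPl
  rename_i w
  rcases p1 with _ | ⟨h2, p2⟩; · simp at hPl
  rcases p2 with _ | ⟨h3, p3⟩
  swap; · simp at hPl
  refine ⟨w, ⟨h1, h2⟩, fun w' ⟨h1', h2'⟩ => ?_⟩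
  have hcv : c ≠ v := by
    intro h; rw [h, SimpleGraph.dist_self] at hv; omega
  have hpath : ∀ (u : V) (hcu : G.Adj c u) (huv : G.Adj u v),
      (Walk.cons hcu (Walk.cons huv Walk.nil) : G.Walk c v).IsPath := by
    intro u hcu huv
    rw [Walk.isPath_def]
    have hu1 : c ≠ u := hcu.ne
    have hu2 : u ≠ v := by
      intro h; rw [h] at hcu
      have := dist_eq_one_iff_adj.mpr hcu; omega
    simp [hu1, hu2, hcv]
  have heq := tree_path_eq hG _ _ (hpath w h1 h2) (hpath w' h1' h2')
  have := congrArg Walk.support heq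
  simpa using this.symm

lemma edge_classify (hG : G.IsTree) {c : V} (hc : ∀ v, G.dist c v ≤ 2) {u w : V}
    (h : G.Adj u w) : u = c ∨ w = c ∨
      (G.Adj c u ∧ G.dist c w = 2) ∨ (G.Adj c w ∧ G.dist c u = 2) := by
  have hBB : ∀ u' w' : V, G.Adj u' w' → G.Adj c u' → G.Adj c w' → False := by
    intro u' w' h' h1 h2
    have hp1 : (Walk.cons h2 Walk.nil : G.Walk c w').IsPath := by
      rw [Walk.isPath_def]; simp [h2.ne]
    have hp2 : (Walk.cons h1 (Walk.cons h' Walk.nil) : G.Walk c w').IsPath := by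
      rw [Walk.isPath_def]; simp [h1.ne, h'.ne, h2.ne]
    have heq := tree_path_eq hG _ _ hp1 hp2
    have := congrArg Walk.length heq
    simp [Walk.length_cons] at this
  have hLL : ∀ u' w' : V, G.Adj u' w' → G.dist c u' = 2 → G.dist c w' = 2 → False := by
    intro u' w' h' h1 h2
    obtain ⟨pu, ⟨hpu1, hpu2⟩, -⟩ := parent_spec hG h1
    obtain ⟨pw, ⟨hpw1, hpw2⟩, -⟩ := parent_spec hG h2
    have hcu : c ≠ u' := by rintro rfl; rw [SimpleGraph.dist_self] at h1; omega
    have hcw : c ≠ w' := by rintro rfl; rw [SimpleGraph.dist_self] at h2; omega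
    have hpuw : pu ≠ w' := by
      rintro rfl; rw [dist_eq_one_iff_adj.mpr hpu1] at h2; omega
    have hp1 : (Walk.cons hpw1 (Walk.cons hpw2 Walk.nil) : G.Walk c w').IsPath := by
      have : pw ≠ w' := by
        rintro rfl; rw [dist_eq_one_iff_adj.mpr hpw1] at h2; omega
      rw [Walk.isPath_def]; simp [hpw1.ne, this, hcw]
    have hp2 : (Walk.cons hpu1 (Walk.cons hpu2 (Walk.cons h' Walk.nil)) :
        G.Walk c w').IsPath := by
      rw [Walk.isPath_def]; simp [hpu1.ne, hpu2.ne, h'.ne, hcu, hcw, hpuw]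
    have heq := tree_path_eq hG _ _ hp1 hp2
    have := congrArg Walk.length heq
    simp [Walk.length_cons] at this
  rcases tri_chotomy hG hc u with h1 | h1 | h1
  · exact Or.inl h1
  · rcases tri_chotomy hG hc w with h2 | h2 | h2
    · exact Or.inr (Or.inl h2)
    · exact absurd (hBB u w h h1 h2) (by simp)
    · exact Or.inr (Or.inr (Or.inl ⟨h1, h2⟩))
  · rcases tri_chotomy hG hc w with h2 | h2 | h2
    · exact Or.inr (Or.inl h2)
    · exact Or.inr (Or.inr (Or.inr ⟨h2, h1⟩))
    · exact absurd (hLL u w h h1 h2) (by simp)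

lemma key_le' {a b r s Nn : ℕ} (hs : s < Nn) (h : a*Nn+r ≤ b*Nn+s) : a ≤ b := by
  by_contra hab
  push_neg at hab
  have h1 : (b+1) * Nn ≤ a * Nn := Nat.mul_le_mul_right _ hab
  rw [add_one_mul] at h1
  omega

end AuxLemmas

/-- Every tree of diameter 4 is odd-graceful. -/
theorem stmt11 {V : Type*} [Fintype V] (G : SimpleGraph V) (htree : G.IsTree)
    (hle : ∀ x y : V, G.dist x y ≤ 4) (hex : ∃ x y : V, G.dist x y = 4) :
    IsOddGraceful G := by
  classical
  obtain ⟨x, y, hxy⟩ := hex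
  obtain ⟨c, hc⟩ := radius_le_two htree hle hxy
  set Bf : Finset V := Finset.univ.filter (fun v => G.Adj c v) with hBf
  set Lf : Finset V := Finset.univ.filter (fun v => G.dist c v = 2) with hLf
  have hmemB : ∀ v, v ∈ Bf ↔ G.Adj c v := by simp [hBf]
  have hmemL : ∀ v, v ∈ Lf ↔ G.dist c v = 2 := by simp [hLf]
  have hcB : c ∉ Bf := by simp [hmemB]
  have hcL : c ∉ Lf := by simp [hmemL, SimpleGraph.dist_self]
  have hBL : ∀ v, v ∈ Bf → v ∉ Lf := by
    intro v hv
    rw [hmemB] at hv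
    rw [hmemL]
    rw [dist_eq_one_iff_adj.mpr hv]
    omega
  set k := Bf.card with hk
  set m := Lf.card with hm
  set n := G.edgeSet.ncard with hn
  -- cardinality
  have hcard : Fintype.card V = 1 + k + m := by
    have huniv : (Finset.univ : Finset V) = insert c (Bf ∪ Lf) := by
      ext v
      simp only [Finset.mem_univ, true_iff, Finset.mem_insert, Finset.mem_union]
      rcases tri_chotomy htree hc v with h | h | h
      · exact Or.inl h
      · exact Or.inr (Or.inl ((hmemB v).mpr h))
      · exact Or.inr (Or.inr ((hmemL v).mpr h))
    rw [Fintype.card, huniv, Finset.card_insert_of_notMem (by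
      simp only [Finset.mem_union]; rintro (h | h); exacts [hcB h, hcL h]),
      Finset.card_union_of_disjoint (Finset.disjoint_left.mpr hBL)]
    omega
  have hnkm : n = k + m := by
    have h1 : G.edgeFinset.card + 1 = Fintype.card V := htree.card_edgeFinset
    have h2 : n = G.edgeFinset.card := by
      rw [hn, Set.ncard_eq_toFinset_card']
      exact congrArg Finset.card (by ext e; simp)
    omega
  -- m ≥ 1
  have hm1 : 1 ≤ m := by
    rcases tri_chotomy htree hc x with h | h | h
    · rcases tri_chotomy htree hc y with h' | h' | h'
      · rw [h, h', SimpleGraph.dist_self] at hxy; omega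
      · rw [h] at hxy; rw [dist_eq_one_iff_adj.mpr h'] at hxy; omega
      · exact Finset.card_pos.mpr ⟨y, (hmemL y).mpr h'⟩
    · rcases tri_chotomy htree hc y with h' | h' | h'
      · rw [h'] at hxy
        rw [SimpleGraph.dist_comm (u := x) (v := c), dist_eq_one_iff_adj.mpr h] at hxy; omega
      · have := htree.isConnected.dist_triangle (u := x) (v := c) (w := y)
        rw [SimpleGraph.dist_comm (u := x) (v := c), dist_eq_one_iff_adj.mpr h,
          dist_eq_one_iff_adj.mpr h', hxy] at this
        omega
      · exact Finset.card_pos.mpr ⟨y, (hmemL y).mpr h'⟩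
    · exact Finset.card_pos.mpr ⟨x, (hmemL x).mpr h⟩
  have hn1 : 1 ≤ n := by omega
  -- parent function
  set pa : V → V := fun v =>
    if h : G.dist c v = 2 then (parent_spec htree h).exists.choose else c with hpadef
  have hpa : ∀ v ∈ Lf, G.Adj c (pa v) ∧ G.Adj (pa v) v := by
    intro v hv
    rw [hmemL] at hv
    simp only [hpadef, dif_pos hv]
    exact (parent_spec htree hv).exists.choose_spec
  have hpau : ∀ v ∈ Lf, ∀ w, G.Adj c w → G.Adj w v → w = pa v := by
    intro v hv w h1 h2
    have hv' := (hmemL v).mp hv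
    obtain ⟨b0, hb0, huniq⟩ := parent_spec htree hv'
    rw [huniq w ⟨h1, h2⟩, huniq (pa v) (hpa v hv)]
  have hpaB : ∀ v ∈ Lf, pa v ∈ Bf := fun v hv => (hmemB _).mpr (hpa v hv).1
  -- index on Bf
  set eB := Bf.equivFin with heB
  set iB : V → ℕ := fun v => if h : v ∈ Bf then (eB ⟨v, h⟩ : ℕ) else 0 with hiBdef
  have hiB_lt : ∀ v ∈ Bf, iB v < k := by
    intro v hv
    simp only [hiBdef, dif_pos hv]
    exact (eB ⟨v, hv⟩).isLt
  have hiB_inj : ∀ u ∈ Bf, ∀ v ∈ Bf, iB u = iB v → u = v := by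
    intro u hu v hv h
    simp only [hiBdef, dif_pos hu, dif_pos hv] at h
    have := eB.injective (Fin.val_injective h)
    exact congrArg Subtype.val this
  have hiB_surj : ∀ j, j < k → ∃ v ∈ Bf, iB v = j := by
    intro j hj
    refine ⟨(eB.symm ⟨j, hj⟩ : { x // x ∈ Bf }), (eB.symm ⟨j, hj⟩).2, ?_⟩
    simp only [hiBdef, dif_pos (eB.symm ⟨j, hj⟩).2]
    rw [Subtype.coe_eta, Equiv.apply_symm_apply]
  -- sorted index on Lf
  set N := Fintype.card V with hN
  set eV := Fintype.equivFin V with heV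
  set g : V → ℕ := fun v => iB (pa v) * N + (eV v : ℕ) with hgdef
  have heVlt : ∀ v : V, (eV v : ℕ) < N := fun v => (eV v).isLt
  have hg_inj : Set.InjOn g Lf := by
    intro u hu v hv h
    simp only [hgdef] at h
    have h1 : iB (pa u) ≤ iB (pa v) := key_le' (heVlt v) h.le
    have h2 : iB (pa v) ≤ iB (pa u) := key_le' (heVlt u) h.ge
    have h3 : iB (pa u) = iB (pa v) := le_antisymm h1 h2
    rw [h3] at h
    have h4 : (eV u : ℕ) = (eV v : ℕ) := by omega
    exact eV.injective (Fin.val_injective h4)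
  set S : Finset ℕ := Lf.image g with hSdef
  have hScard : S.card = m := by
    rw [hSdef, Finset.card_image_of_injOn hg_inj]
  set ordS := S.orderIsoOfFin hScard with hordS
  have hgS : ∀ v ∈ Lf, g v ∈ S := fun v hv => Finset.mem_image_of_mem g hv
  set iL : V → ℕ := fun v =>
    if h : v ∈ Lf then (ordS.symm ⟨g v, Finset.mem_image_of_mem g h⟩ : Fin m) else 0
    with hiLdef
  have hiL_lt : ∀ v ∈ Lf, iL v < m := by
    intro v hv
    simp only [hiLdef, dif_pos hv]
    exact (ordS.symm _).isLt
  have hiL_inj : ∀ u ∈ Lf, ∀ v ∈ Lf, iL u = iL v → u = v := by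
    intro u hu v hv h
    simp only [hiLdef, dif_pos hu, dif_pos hv] at h
    have h2 := ordS.symm.injective (Fin.val_injective h)
    have h3 : g u = g v := congrArg Subtype.val h2
    exact hg_inj hu hv h3
  have hiL_surj : ∀ q, q < m → ∃ v ∈ Lf, iL v = q := by
    intro q hq
    set s0 := ordS ⟨q, hq⟩ with hs0
    obtain ⟨v, hv, hgv⟩ := Finset.mem_image.mp s0.2
    refine ⟨v, hv, ?_⟩
    simp only [hiLdef, dif_pos hv]
    have : (⟨g v, Finset.mem_image_of_mem g hv⟩ : {z // z ∈ S}) = s0 := Subtype.ext hgv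
    rw [this, hs0, OrderIso.symm_apply_apply]
  have hmono : ∀ u ∈ Lf, ∀ v ∈ Lf, iL u < iL v → iB (pa u) ≤ iB (pa v) := by
    intro u hu v hv h
    simp only [hiLdef, dif_pos hu, dif_pos hv] at h
    have hfin : ordS.symm ⟨g u, Finset.mem_image_of_mem g hu⟩ <
        ordS.symm ⟨g v, Finset.mem_image_of_mem g hv⟩ := by
      rw [Fin.lt_def]; exact h
    have h2 := ordS.symm.lt_iff_lt.mp hfin
    rw [Subtype.mk_lt_mk] at h2
    simp only [hgdef] at h2
    exact key_le' (heVlt v) h2.le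
  have hsum_inj : ∀ u ∈ Lf, ∀ v ∈ Lf,
      iB (pa u) + iL u = iB (pa v) + iL v → u = v := by
    intro u hu v hv h
    rcases lt_trichotomy (iL u) (iL v) with h' | h' | h'
    · have := hmono u hu v hv h'; omega
    · exact hiL_inj u hu v hv h'
    · have := hmono v hv u hu h'; omega
  -- the labeling
  set f : V → ℕ := fun v =>
    if v = c then 0
    else if v ∈ Bf then 2 * (n - 1 - iB v) + 1
    else 2 * (n - 1 - iB (pa v) - iL v) with hfdef
  have hfc : f c = 0 := by simp [hfdef]
  have hfB : ∀ v ∈ Bf, f v = 2 * (n - 1 - iB v) + 1 := by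
    intro v hv
    have hne : v ≠ c := fun h => hcB (h ▸ hv)
    simp only [hfdef, if_neg hne, if_pos hv]
  have hfL : ∀ v ∈ Lf, f v = 2 * (n - 1 - iB (pa v) - iL v) := by
    intro v hv
    have hne : v ≠ c := fun h => hcL (h ▸ hv)
    have hnB : v ∉ Bf := fun h => hBL v h hv
    simp only [hfdef, if_neg hne, if_neg hnB]
  have hkn : k ≤ n := by omega
  have hk1 : 1 ≤ k := by
    obtain ⟨v, hv⟩ := Finset.card_pos.mp (hm ▸ hm1)
    exact Finset.card_pos.mpr ⟨pa v, hpaB v hv⟩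
  have hn2 : 2 ≤ n := by omega
  have hsum_le : ∀ v ∈ Lf, iB (pa v) + iL v ≤ n - 2 := by
    intro v hv
    have h1 := hiB_lt (pa v) (hpaB v hv)
    have h2 := hiL_lt v hv
    omega
  -- injectivity
  have hinj : Function.Injective f := by
    intro u v h
    by_contra hne
    rcases tri_chotomy htree hc u with h1 | h1 | h1 <;>
      rcases tri_chotomy htree hc v with h2 | h2 | h2
    · exact hne (h1.trans h2.symm)
    · subst h1
      rw [hfc, hfB v ((hmemB v).mpr h2)] at h
      omega
    · subst h1
      have hv := (hmemL v).mpr h2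
      rw [hfc, hfL v hv] at h
      have := hsum_le v hv
      omega
    · subst h2
      rw [hfc, hfB u ((hmemB u).mpr h1)] at h
      omega
    · have hu := (hmemB u).mpr h1
      have hv := (hmemB v).mpr h2
      rw [hfB u hu, hfB v hv] at h
      have g1 := hiB_lt u hu
      have g2 := hiB_lt v hv
      have : iB u = iB v := by omega
      exact hne (hiB_inj u hu v hv this)
    · have hu := (hmemB u).mpr h1
      have hv := (hmemL v).mpr h2
      rw [hfB u hu, hfL v hv] at h
      omega
    · subst h2
      have hu := (hmemL u).mpr h1
      rw [hfc, hfL u hu] at h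
      have := hsum_le u hu
      omega
    · have hu := (hmemL u).mpr h1
      have hv := (hmemB v).mpr h2
      rw [hfL u hu, hfB v hv] at h
      omega
    · have hu := (hmemL u).mpr h1
      have hv := (hmemL v).mpr h2
      rw [hfL u hu, hfL v hv] at h
      have g1 := hsum_le u hu
      have g2 := hsum_le v hv
      have : iB (pa u) + iL u = iB (pa v) + iL v := by omega
      exact hne (hsum_inj u hu v hv this)
  -- bounds
  have hbound : ∀ v, f v < 2 * n := by
    intro v
    rcases tri_chotomy htree hc v with h1 | h1 | h1
    · subst h1; rw [hfc]; omega
    · have hv := (hmemB v).mpr h1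
      rw [hfB v hv]
      have := hiB_lt v hv
      omega
    · have hv := (hmemL v).mpr h1
      rw [hfL v hv]
      omega
  -- weight formulas
  have hwB : ∀ v ∈ Bf, ((f c : ℤ) - f v).natAbs = 2 * (n - 1 - iB v) + 1 := by
    intro v hv
    rw [hfc, hfB v hv]
    omega
  have hwL : ∀ v ∈ Lf, ((f (pa v) : ℤ) - f v).natAbs = 2 * iL v + 1 := by
    intro v hv
    rw [hfB (pa v) (hpaB v hv), hfL v hv]
    have h1 := hiB_lt (pa v) (hpaB v hv)
    have h2 := hiL_lt v hv
    omega
  refine ⟨f, hinj, fun v => hn ▸ hbound v, fun w' => ?_⟩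
  rw [← hn]
  constructor
  · rintro ⟨u, w, hadj, rfl⟩
    rcases edge_classify htree hc hadj with h1 | h1 | ⟨h1, h2⟩ | ⟨h1, h2⟩
    · subst h1
      have hw : w ∈ Bf := (hmemB w).mpr hadj
      rw [hwB w hw]
      have := hiB_lt w hw
      exact ⟨Nat.odd_iff.mpr (by omega), by omega⟩
    · subst h1
      have hu : u ∈ Bf := (hmemB u).mpr hadj.symm
      rw [hfc, hfB u hu]
      have := hiB_lt u hu
      exact ⟨Nat.odd_iff.mpr (by omega), by omega⟩
    · have hw : w ∈ Lf := (hmemL w).mpr h2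
      have hu : u = pa w := hpau w hw u h1 hadj
      subst hu
      rw [hwL w hw]
      have := hiL_lt w hw
      exact ⟨Nat.odd_iff.mpr (by omega), by omega⟩
    · have hu : u ∈ Lf := (hmemL u).mpr h2
      have hw : w = pa u := hpau u hu w h1 hadj.symm
      subst hw
      rw [hfL u hu, hfB (pa u) (hpaB u hu)]
      have h3 := hiB_lt (pa u) (hpaB u hu)
      have h4 := hiL_lt u hu
      exact ⟨Nat.odd_iff.mpr (by omega), by omega⟩
  · rintro ⟨hodd, hlt⟩
    obtain ⟨j, rfl⟩ := hodd
    by_cases hjm : j < m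
    · obtain ⟨v, hv, hiLv⟩ := hiL_surj j hjm
      exact ⟨pa v, v, (hpa v hv).2, by rw [hwL v hv, hiLv]⟩
    · push_neg at hjm
      obtain ⟨v, hv, hiBv⟩ := hiB_surj (n - 1 - j) (by omega)
      refine ⟨c, v, (hmemB v).mp hv, ?_⟩
      rw [hwB v hv, hiBv]
      omega
end

section
/- The complete bipartite graph K_{m,n} is odd-graceful for all m, n ≥ 1. -/
open SimpleGraph

lemma kmn_ncard (m n : ℕ) :
    (completeBipartiteGraph (Fin m) (Fin n)).edgeSet.ncard = m * n := by
  have hb : Function.Bijective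
      (fun p : Fin m × Fin n =>
        (⟨s(Sum.inl p.1, Sum.inr p.2), by simp⟩ :
          (completeBipartiteGraph (Fin m) (Fin n)).edgeSet)) := by
    constructor
    · rintro ⟨a, b⟩ ⟨c, d⟩ h
      simp only [Subtype.mk.injEq, Sym2.eq_iff] at h
      rcases h with ⟨h1, h2⟩ | ⟨h1, h2⟩
      · simp_all
      · exact absurd h1 (by simp)
    · rintro ⟨e, he⟩
      induction e with
      | _ x y =>
        rw [SimpleGraph.mem_edgeSet] at he
        rcases x with a | a <;> rcases y with b | b <;>
          simp only [completeBipartiteGraph_adj] at he <;> simp at he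
        · exact ⟨(a, b), rfl⟩
        · exact ⟨(b, a), by simp [Sym2.eq_swap]⟩
  rw [← Nat.card_coe_set_eq, ← Nat.card_eq_of_bijective _ hb]
  simp

lemma natAbs_sub_comm' (x y : ℤ) : (x - y).natAbs = (y - x).natAbs := by omega

lemma key_natAbs (m : ℕ) (hm : 1 ≤ m) (i j : ℕ) (hi : i < m) :
    ((2 * i : ℤ) - ((2 * m * (j + 1) - 1 : ℕ) : ℤ)).natAbs
      = 2 * (m * j + (m - 1 - i)) + 1 := by
  have h1 : 2 * m * (j + 1) = 2 * (m * j) + 2 * m := by ring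
  omega

/-- The complete bipartite graph `K_{m,n}` is odd-graceful for
all `m, n ≥ 1`. -/
theorem stmt15 (m n : ℕ) (hm : 1 ≤ m) (hn : 1 ≤ n) :
    IsOddGraceful (completeBipartiteGraph (Fin m) (Fin n)) := by
  refine ⟨Sum.elim (fun i : Fin m => 2 * (i : ℕ))
    (fun j : Fin n => 2 * m * ((j : ℕ) + 1) - 1), ?_, ?_, ?_⟩
  · rintro (a | a) (b | b) h <;> simp only [Sum.elim_inl, Sum.elim_inr] at h
    · have := Fin.ext (show (a : ℕ) = b by omega); rw [this]
    · exfalso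
      have h1 : 2 * m * ((b : ℕ) + 1) = 2 * (m * (b : ℕ)) + 2 * m := by ring
      omega
    · exfalso
      have h1 : 2 * m * ((a : ℕ) + 1) = 2 * (m * (a : ℕ)) + 2 * m := by ring
      omega
    · have h1 : 2 * m * ((a : ℕ) + 1) = 2 * (m * (a : ℕ)) + 2 * m := by ring
      have h2 : 2 * m * ((b : ℕ) + 1) = 2 * (m * (b : ℕ)) + 2 * m := by ring
      have h3 : m * (a : ℕ) = m * (b : ℕ) := by omega
      have := Nat.eq_of_mul_eq_mul_left (by omega) h3
      exact congrArg Sum.inr (Fin.ext this)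
  · rw [kmn_ncard]
    rintro (a | a)
    · simp only [Sum.elim_inl]
      have h1 : (a : ℕ) < m := a.2
      have h2 : m * 1 ≤ m * n := Nat.mul_le_mul (le_refl m) hn
      omega
    · show 2 * m * ((a : ℕ) + 1) - 1 < 2 * (m * n)
      have h1 : m * ((a : ℕ) + 1) ≤ m * n := Nat.mul_le_mul (le_refl m) a.2
      have h2 : 2 * m * ((a : ℕ) + 1) = 2 * (m * ((a : ℕ) + 1)) := by ring
      have h3 : 1 * 1 ≤ m * ((a : ℕ) + 1) := Nat.mul_le_mul hm (by omega)
      omega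
  · rw [kmn_ncard]
    intro w
    have hcalc : ∀ (i : Fin m) (j : Fin n),
        Odd (((2 * (i : ℕ) : ℤ) - ((2 * m * ((j : ℕ) + 1) - 1 : ℕ) : ℤ)).natAbs) ∧
        (((2 * (i : ℕ) : ℤ) - ((2 * m * ((j : ℕ) + 1) - 1 : ℕ) : ℤ)).natAbs) < 2 * (m * n) := by
      intro i j
      rw [key_natAbs m hm (i : ℕ) (j : ℕ) i.2]
      constructor
      · exact ⟨m * (j : ℕ) + (m - 1 - (i : ℕ)), by ring⟩
      · have h1 : m * ((j : ℕ) + 1) ≤ m * n := Nat.mul_le_mul (le_refl m) j.2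
        have h2 : m * ((j : ℕ) + 1) = m * (j : ℕ) + m := by ring
        omega
    constructor
    · rintro ⟨x, y, hadj, hw⟩
      rcases x with a | a <;> rcases y with b | b
      · simp at hadj
      · simp only [Sum.elim_inl, Sum.elim_inr] at hw
        push_cast at hw
        rw [← hw]
        exact hcalc a b
      · simp only [Sum.elim_inl, Sum.elim_inr] at hw
        rw [natAbs_sub_comm'] at hw
        push_cast at hw
        rw [← hw]
        exact hcalc b a
      · simp at hadj
    · rintro ⟨⟨k, hk⟩, hlt⟩
      subst hk
      set q := k / m with hq
      set r := k % m with hr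
      have hdm : m * q + r = k := Nat.div_add_mod k m
      have hrm : r < m := Nat.mod_lt k hm
      have hqn : q < n := by
        rw [hq]
        exact Nat.div_lt_of_lt_mul (by omega)
      refine ⟨Sum.inl ⟨m - 1 - r, by omega⟩, Sum.inr ⟨q, hqn⟩, by simp, ?_⟩
      simp only [Sum.elim_inl, Sum.elim_inr]
      push_cast
      rw [key_natAbs m hm (m - 1 - r) q (by omega)]
      omega
end

section
/- The cycle C_n is odd-graceful when n ≡ 2 (mod 4). -/
open SimpleGraph

/-- The labeling function. -/
def oddFaux (n i : ℕ) : ℕ :=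
  if i % 2 = 0 then i else if i ≤ n / 2 then 2 * n - i else n - i

lemma cycle_ncard_aux (m : ℕ) : (cycleGraph (m + 3)).edgeSet.ncard = m + 3 := by
  have h := SimpleGraph.sum_degrees_eq_twice_card_edges (cycleGraph (m + 3))
  simp only [cycleGraph_degree_three_le, Finset.sum_const, Finset.card_univ,
    Fintype.card_fin, smul_eq_mul] at h
  rw [← SimpleGraph.coe_edgeFinset, Set.ncard_coe_finset]
  omega

lemma oddF_weight_aux (n i : ℕ) (hn4 : n % 4 = 2) (hn6 : 6 ≤ n) (hi : i < n) :
    ((oddFaux n ((i + 1) % n) : ℤ) - oddFaux n i).natAbs =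
      if i = n - 1 then 1 else if i ≤ n / 2 then 2 * n - 1 - 2 * i else 2 * i + 1 - n := by
  have hmod : (i + 1) % n = if i = n - 1 then 0 else i + 1 := by
    split
    · next hh => rw [show i + 1 = n by omega, Nat.mod_self]
    · exact Nat.mod_eq_of_lt (by omega)
  rw [hmod]
  unfold oddFaux
  split_ifs <;> omega

lemma fin_adj_val_aux {N : ℕ} {x y : Fin N} (h : (cycleGraph N).Adj x y) :
    x.val = (y.val + 1) % N ∨ y.val = (x.val + 1) % N := by
  have hx := x.isLt; have hy := y.isLt
  have key : ∀ a b : Fin N, (a - b).val = 1 → a.val = (b.val + 1) % N := by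
    intro a b hab
    rw [Fin.sub_def] at hab
    simp only at hab
    have ha := a.isLt; have hb := b.isLt
    rcases Nat.lt_or_ge (N - b.val + a.val) N with hc | hc
    · rw [Nat.mod_eq_of_lt hc] at hab
      have hb1 : b.val + 1 = N := by omega
      rw [hb1, Nat.mod_self]
      omega
    · rw [Nat.mod_eq_sub_mod hc, Nat.mod_eq_of_lt (by omega)] at hab
      rw [Nat.mod_eq_of_lt (by omega)]
      omega
  rcases cycleGraph_adj'.mp h with h1 | h1
  · exact Or.inl (key x y h1)
  · exact Or.inr (key y x h1)

lemma fin_adj_mk_aux {N : ℕ} (hN : 2 ≤ N) (i : ℕ) (hi : i < N) :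
    (cycleGraph N).Adj ⟨i, hi⟩ ⟨(i + 1) % N, Nat.mod_lt _ (by omega)⟩ := by
  rw [cycleGraph_adj']
  right
  rw [Fin.sub_def]
  simp only
  rcases Nat.lt_or_ge (i + 1) N with hc | hc
  · rw [Nat.mod_eq_of_lt hc]
    have h1 : N - i + (i + 1) = N + 1 := by omega
    rw [h1, Nat.add_mod_left, Nat.mod_eq_of_lt (by omega)]
  · have h0 : (i + 1) % N = 0 := by
      have : i + 1 = N := by omega
      simp [this]
    rw [h0]
    have h1 : i = N - 1 := by omega
    rw [Nat.mod_eq_of_lt (by omega)]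
    omega

lemma main_case_aux (n : ℕ) (hn4 : n % 4 = 2) (hn6 : 6 ≤ n) :
    ∃ f : Fin n → ℕ, Function.Injective f ∧ (∀ v, f v < 2 * (cycleGraph n).edgeSet.ncard) ∧
      ∀ m : ℕ, (∃ x y, (cycleGraph n).Adj x y ∧ (((f x : ℤ)) - f y).natAbs = m) ↔
        (Odd m ∧ m < 2 * (cycleGraph n).edgeSet.ncard) := by
  obtain ⟨m, rfl⟩ : ∃ m, n = m + 3 := ⟨n - 3, by omega⟩
  refine ⟨fun v => oddFaux (m + 3) v.val, ?_, ?_, ?_⟩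
  · intro a b hab
    have ha := a.isLt; have hb := b.isLt
    simp only [oddFaux] at hab
    refine Fin.ext ?_
    split_ifs at hab <;> omega
  · intro v
    have hv := v.isLt
    rw [cycle_ncard_aux]
    simp only [oddFaux]
    split_ifs <;> omega
  · intro w
    rw [cycle_ncard_aux]
    have nsc : ∀ a b : ℤ, (a - b).natAbs = (b - a).natAbs := fun a b => by
      rw [← Int.natAbs_neg, neg_sub]
    constructor
    · rintro ⟨x, y, hadj, rfl⟩
      have hx := x.isLt; have hy := y.isLt
      rcases fin_adj_val_aux hadj with h1 | h1
      · beta_reduce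
        rw [h1, oddF_weight_aux (m + 3) y.val hn4 hn6 hy]
        rw [Nat.odd_iff]
        split_ifs <;> omega
      · beta_reduce
        rw [nsc, h1, oddF_weight_aux (m + 3) x.val hn4 hn6 hx]
        rw [Nat.odd_iff]
        split_ifs <;> omega
    · rintro ⟨hodd, hlt⟩
      rw [Nat.odd_iff] at hodd
      obtain ⟨i, hiN, hwi⟩ : ∃ i, i < m + 3 ∧
          (if i = (m + 3) - 1 then 1 else if i ≤ (m + 3) / 2 then 2 * (m + 3) - 1 - 2 * i
            else 2 * i + 1 - (m + 3)) = w := by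
        by_cases h1 : w = 1
        · exact ⟨m + 2, by omega, by rw [if_pos (by omega)]; omega⟩
        by_cases h2 : m + 2 ≤ w
        · refine ⟨(2 * (m + 3) - 1 - w) / 2, by omega, ?_⟩
          rw [if_neg (by omega), if_pos (by omega)]
          omega
        · refine ⟨(w + m + 2) / 2, by omega, ?_⟩
          rw [if_neg (by omega), if_neg (by omega)]
          omega
      refine ⟨⟨i, hiN⟩, ⟨(i + 1) % (m + 3), Nat.mod_lt _ (by omega)⟩,
        fin_adj_mk_aux (by omega) i hiN, ?_⟩
      beta_reduce
      rw [nsc]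
      rw [oddF_weight_aux (m + 3) i hn4 hn6 hiN]
      exact hwi
/-- The cycle `C_n` is odd-graceful when `n ≡ 2 (mod 4)`. -/
theorem stmt17 (n : ℕ) (h : n % 4 = 2) : IsOddGraceful (cycleGraph n) := by
  rcases Nat.lt_or_ge n 6 with h6 | h6
  · have hn2 : n = 2 := by omega
    subst hn2
    have hc : (cycleGraph 2).edgeSet.ncard = 1 := by
      rw [← SimpleGraph.coe_edgeFinset, Set.ncard_coe_finset]
      decide
    refine ⟨fun v => v.val, fun a b hab => Fin.ext hab, ?_, ?_⟩
    · intro v; rw [hc]; exact v.isLt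
    · intro w
      rw [hc]
      constructor
      · rintro ⟨x, y, hadj, rfl⟩
        fin_cases x <;> fin_cases y <;> simp_all
      · rintro ⟨ho, hl⟩
        have hw : w = 1 := by rw [Nat.odd_iff] at ho; omega
        subst hw
        exact ⟨0, 1, by decide, by decide⟩
  · obtain ⟨f, h1, h2, h3⟩ := main_case_aux n h h6
    exact ⟨f, h1, h2, h3⟩
end
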